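/- Fix p_s with 0 < p_s < 1/2. Then the ratio of the misinformation cost to the ignorance cost, Λ(p_s, 1 - p_r - p_s) / Λ(p_s, p_r - p_s), tends to +∞ as p_r tends to p_s from the right: as the receiver becomes more opinionated, the relative cost of correcting misinformation versus ignorance grows without bound. -/

import Mathlib

/-- The logical semantic entropy `Λ(a,b) = a·log₂((a+b)/a) + b·log₂((a+b)/b)`. -/
noncomputable def lse (a b : ℝ) : ℝ :=
  a * Real.logb 2 ((a + b) / a) + b * Real.logb 2 ((a + b) / b)

/-- The binary entropy function `H₂(p) = -p·log₂ p - (1-p)·log₂(1-p)`. -/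
noncomputable def binEnt (p : ℝ) : ℝ :=
  -p * Real.logb 2 p - (1 - p) * Real.logb 2 (1 - p)

/-!
Since `Λ(a,b)·log 2 = η(a) + η(b) - η(a+b)` with `η(x) = -x log x` continuous, `Λ(a,·)` is
continuous with `Λ(a,0) = 0`, and it is positive for positive arguments. As `p_r ↓ p_s` the
ignorance cost `Λ(p_s, p_r - p_s)` therefore tends to `0` through positive values, while the
misinformation cost tends to `Λ(p_s, 1 - 2p_s) > 0`.
-/

open Real Filter Topology

/-- The junk values `x / 0 = 0` and `log 0 = 0` make this hold without side conditions. -/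
lemma lse_eq_negMulLog (a b : ℝ) :
    lse a b = (negMulLog a + negMulLog b - negMulLog (a + b)) / log 2 := by
  rcases eq_or_ne a 0 with rfl | ha
  · rcases eq_or_ne b 0 with rfl | hb <;> simp [lse, negMulLog, *]
  rcases eq_or_ne b 0 with rfl | hb
  · simp [lse, negMulLog, div_self ha]
  rcases eq_or_ne (a + b) 0 with hab | hab
  · obtain rfl : b = -a := by linarith
    simp [lse, negMulLog, log_neg_eq_log]
  simp only [lse, negMulLog, logb, log_div hab ha, log_div hab hb]
  ring

lemma continuous_lse (a : ℝ) : Continuous (lse a) := by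
  simp only [funext (lse_eq_negMulLog a)]
  fun_prop

@[simp] lemma lse_zero_right (a : ℝ) : lse a 0 = 0 := by simp [lse_eq_negMulLog]

lemma lse_pos {a b : ℝ} (ha : 0 < a) (hb : 0 < b) : 0 < lse a b := by
  have h1 : 0 < logb 2 ((a + b) / a) := logb_pos one_lt_two ((one_lt_div ha).2 (by linarith))
  have h2 : 0 < logb 2 ((a + b) / b) := logb_pos one_lt_two ((one_lt_div hb).2 (by linarith))
  unfold lse
  positivity

lemma tendsto_lse_nhdsGT_zero {a : ℝ} (ha : 0 < a) : Tendsto (lse a) (𝓝[>] 0) (𝓝[>] 0) := by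
  refine tendsto_nhdsWithin_iff.2 ⟨?_, ?_⟩
  · simpa using ((continuous_lse a).tendsto 0).mono_left nhdsWithin_le_nhds
  · filter_upwards [self_mem_nhdsWithin] with b hb using lse_pos ha hb

/-- the ratio of the misinformation cost to the ignorance cost tends to
`+∞` as `p_r → p_s⁺`. -/
theorem lse_misinformation_ratio_tendsto_atTop (ps : ℝ) (hs0 : 0 < ps) (hs1 : ps < 1 / 2) :
    Filter.Tendsto (fun pr : ℝ => lse ps (1 - pr - ps) / lse ps (pr - ps))
      (nhdsWithin ps (Set.Ioi ps)) Filter.atTop := by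
  have hnum : Tendsto (fun pr => lse ps (1 - pr - ps)) (𝓝[>] ps) (𝓝 (lse ps (1 - ps - ps))) :=
    ((continuous_lse ps).comp (by fun_prop : Continuous fun pr : ℝ => 1 - pr - ps)).tendsto ps
      |>.mono_left nhdsWithin_le_nhds
  have hgap : Tendsto (· - ps) (𝓝[>] ps) (𝓝[>] 0) :=
    (map_subRight_nhdsGT (c := ps) (a := ps)).trans_le (by rw [sub_self])
  have hden := (tendsto_lse_nhdsGT_zero hs0).comp hgap
  simpa [div_eq_mul_inv] using
    hnum.pos_mul_atTop (lse_pos hs0 (by linarith)) hden.inv_tendsto_nhdsGT_zero
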